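/- arXiv:1909.09684 — 2 statements merged into one kernel-verified Lean document; each statement's English description precedes it below -/
import Mathlib

section
/- On the elliptic curve E''₁₅ : y² = x³ − 60051888x + 82842141312 over ℚ, the pairs (852, 179712) and (−3468, 499392) are ℚ-rational points, each of infinite order in the group of ℚ-rational points; in particular the group of ℚ-rational points of E''₁₅ is infinite. -/
/-!
The cubic factors as `(x + 8364)(x - 1428)(x - 6936)`, so the curve has full rational 2-torsion.
For each root `e`, the map `(x, y) ↦ x - e` is a homomorphism `E(ℚ) → ℚˣ / ℚˣ²` (2-descent):
if a line `y = ℓ(x - x₁) + y₁` meets the curve in `x₁, x₂, x₃`, then `f(X) - (ℓ(X - x₁) + y₁)²`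
equals `(X - x₁)(X - x₂)(X - x₃)`, and evaluating at `X = e` makes `∏ (xᵢ - e)` a square.
If `R` had finite order, some multiple `T` of `R` with `2T = 0` would be congruent modulo
`2E(ℚ)` either to `R`, or to `0` with `T ≠ 0`. Under the descent maps at `e = -8364` and
`e = 1428` each of the four candidates for `T` turns this into the claim that an explicit
rational number is a square, which it is not.
-/

/-- The elliptic curve `E''₁₅ : y² = x³ − 60051888x + 82842141312` over `ℚ`,
in affine coordinates. -/
noncomputable def E15'' : WeierstrassCurve.Affine ℚ := ⟨0, 0, 0, -60051888, 82842141312⟩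

lemma exists_two_nsmul_eq_zero_of_isOfFinAddOrder {G : Type*} [AddGroup G] {R : G}
    (hR : IsOfFinAddOrder R) :
    ∃ T S : G, 2 • T = 0 ∧ (T - R = 2 • S ∨ (T ≠ 0 ∧ T = 2 • S)) := by
  have hmR : addOrderOf R • R = 0 := addOrderOf_nsmul_eq_zero R
  have hm : 0 < addOrderOf R := hR.addOrderOf_pos
  obtain ⟨j, hj | hj⟩ := Nat.even_or_odd' (addOrderOf R)
  · have hT : j • R ≠ 0 := nsmul_ne_zero_of_lt_addOrderOf (by omega) (by omega)
    have h2T : 2 • j • R = 0 := by rw [← mul_nsmul', ← hj, hmR]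
    obtain ⟨i, hi | hi⟩ := Nat.even_or_odd' j
    · exact ⟨j • R, i • R, h2T, Or.inr ⟨hT, by rw [hi, mul_nsmul']⟩⟩
    · refine ⟨j • R, i • R, h2T, Or.inl ?_⟩
      rw [hi, ← mul_nsmul', add_nsmul, one_nsmul, add_sub_cancel_right]
  · refine ⟨0, j • R, nsmul_zero 2, Or.inl ?_⟩
    rw [hj, add_nsmul, one_nsmul] at hmR
    rw [zero_sub, neg_eq_of_add_eq_zero_left hmR, mul_nsmul']

namespace WeierstrassCurve.Affine

open Polynomial

variable {K : Type*} [Field K] {W : WeierstrassCurve.Affine K}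

lemma equation_iff_of_a₁_a₃ (ha₁ : W.a₁ = 0) (ha₃ : W.a₃ = 0) (x y : K) :
    W.Equation x y ↔ y ^ 2 = x ^ 3 + W.a₂ * x ^ 2 + W.a₄ * x + W.a₆ := by
  simp [equation_iff, ha₁, ha₃]

lemma nonsingular_zero_iff_of_a₁_a₃ (ha₁ : W.a₁ = 0) (ha₃ : W.a₃ = 0) (e : K) :
    W.Nonsingular e 0 ↔ e ^ 3 + W.a₂ * e ^ 2 + W.a₄ * e + W.a₆ = 0 ∧
      3 * e ^ 2 + 2 * W.a₂ * e + W.a₄ ≠ 0 := by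
  rw [nonsingular_iff, equation_iff_of_a₁_a₃ ha₁ ha₃]
  simp [ha₁, ha₃, eq_comm]

lemma some_eq_some_zero (ha₁ : W.a₁ = 0) (ha₃ : W.a₃ = 0) {e y : K} (he : W.Nonsingular e 0)
    (h : W.Nonsingular e y) : Point.some e y h = .some e 0 he := by
  have hy : y ^ 2 = 0 := by
    rw [(equation_iff_of_a₁_a₃ ha₁ ha₃ e y).mp h.1,
      ((nonsingular_zero_iff_of_a₁_a₃ ha₁ ha₃ e).mp he).1]
  rw [Point.some.injEq]
  exact ⟨rfl, pow_eq_zero_iff two_ne_zero |>.mp hy⟩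

variable [DecidableEq K]

lemma exists_eq_some_zero_of_two_nsmul_eq_zero [NeZero (2 : K)] (ha₁ : W.a₁ = 0)
    (ha₃ : W.a₃ = 0) {T : W.Point} (hT : 2 • T = 0) (hT0 : T ≠ 0) :
    ∃ x, ∃ h : W.Nonsingular x 0, T = .some x 0 h := by
  rcases T with _ | ⟨x, y, h⟩
  · exact absurd Point.zero_def.symm hT0
  · have hy : y = W.negY x y := by
      by_contra hy
      rw [two_nsmul, Point.add_self_of_Y_ne hy] at hT
      exact Point.some_ne_zero _ hT
    have hy0 : y = 0 := by
      rw [negY, ha₁, ha₃, zero_mul, sub_zero, sub_zero, eq_neg_iff_add_eq_zero, ← two_mul] at hy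
      exact (mul_eq_zero.mp hy).resolve_left two_ne_zero
    subst hy0
    exact ⟨x, h, rfl⟩

lemma sub_mul_sub_mul_addX_sub_eq_sq (ha₁ : W.a₁ = 0) (ha₃ : W.a₃ = 0) {e x₁ x₂ y₁ y₂ : K}
    (he : W.Equation e 0) (h₁ : W.Equation x₁ y₁) (h₂ : W.Equation x₂ y₂)
    (hxy : ¬(x₁ = x₂ ∧ y₁ = W.negY x₂ y₂)) :
    (x₁ - e) * (x₂ - e) * (W.addX x₁ x₂ (W.slope x₁ x₂ y₁ y₂) - e) =
      (W.slope x₁ x₂ y₁ y₂ * (e - x₁) + y₁) ^ 2 := by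
  have h := congr_arg (eval e) (addPolynomial_slope h₁ h₂ hxy)
  rw [equation_iff_of_a₁_a₃ ha₁ ha₃] at he
  simp only [addPolynomial, linePolynomial, polynomial, ha₁, ha₃, eval_add, eval_sub, eval_mul,
    eval_pow, eval_neg, eval_C, eval_X, map_zero, zero_mul, add_zero] at h
  linear_combination he - h

/-- Translation by `(e, 0)` acts on `x`-coordinates as `x ↦ e + f'(e) / (x - e)`. -/
lemma sub_mul_addX_sub_eq (ha₁ : W.a₁ = 0) (ha₃ : W.a₃ = 0) {e x y : K}
    (he : W.Equation e 0) (h : W.Equation x y) (hx : x ≠ e) :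
    (x - e) * (W.addX e x (W.slope e x 0 y) - e) = 3 * e ^ 2 + 2 * W.a₂ * e + W.a₄ := by
  rw [equation_iff_of_a₁_a₃ ha₁ ha₃] at he h
  have hxe : x - e ≠ 0 := sub_ne_zero.mpr hx
  have hL : W.slope e x 0 y * (x - e) = y := by
    rw [slope_of_X_ne hx.symm, zero_sub, neg_div, ← div_neg, neg_sub, div_mul_cancel₀ _ hxe]
  set L := W.slope e x 0 y
  have key :
      (x - e) * ((x - e) * (W.addX e x L - e) - (3 * e ^ 2 + 2 * W.a₂ * e + W.a₄)) = 0 := by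
    simp only [addX, ha₁]
    linear_combination (L * (x - e) + y) * hL + h - he
  exact sub_eq_zero.mp ((mul_eq_zero.mp key).resolve_left hxe)

variable (W) in
/-- At `(e, 0)` itself `x - e` vanishes; its class is then `f'(e) = (e - e')(e - e'')`, the
product of the values at the other two 2-torsion points. -/
def twoDescent (e : K) : W.Point → K
  | .zero => 1
  | .some x _ _ => if x = e then 3 * e ^ 2 + 2 * W.a₂ * e + W.a₄ else x - e

@[simp] lemma twoDescent_zero (e : K) : W.twoDescent e 0 = 1 := rfl

lemma twoDescent_some (e : K) {x y : K} (h : W.Nonsingular x y) :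
    W.twoDescent e (.some x y h) = if x = e then 3 * e ^ 2 + 2 * W.a₂ * e + W.a₄ else x - e :=
  rfl

lemma twoDescent_neg (e : K) (P : W.Point) : W.twoDescent e (-P) = W.twoDescent e P := by
  rcases P with _ | ⟨x, y, h⟩
  · rfl
  · rw [Point.neg_some, twoDescent_some, twoDescent_some]

lemma twoDescent_ne_zero (ha₁ : W.a₁ = 0) (ha₃ : W.a₃ = 0) {e : K} (he : W.Nonsingular e 0)
    (P : W.Point) : W.twoDescent e P ≠ 0 := by
  rcases P with _ | ⟨x, y, h⟩
  · exact one_ne_zero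
  · rw [twoDescent_some]
    split_ifs with hx
    · exact ((nonsingular_zero_iff_of_a₁_a₃ ha₁ ha₃ e).mp he).2
    · exact sub_ne_zero.mpr hx

lemma twoDescent_of_ne (ha₁ : W.a₁ = 0) (ha₃ : W.a₃ = 0) {e x y : K} (he : W.Nonsingular e 0)
    (h : W.Nonsingular x y) (hne : Point.some x y h ≠ .some e 0 he) :
    W.twoDescent e (.some x y h) = x - e := by
  rw [twoDescent_some, if_neg]
  rintro rfl
  exact hne (some_eq_some_zero ha₁ ha₃ he h)

lemma isSquare_twoDescent_torsion_add_mul (ha₁ : W.a₁ = 0) (ha₃ : W.a₃ = 0) {e : K}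
    (he : W.Nonsingular e 0) (Q : W.Point) :
    IsSquare (W.twoDescent e (.some e 0 he + Q) * W.twoDescent e (.some e 0 he) *
      W.twoDescent e Q) := by
  have hc := ((nonsingular_zero_iff_of_a₁_a₃ ha₁ ha₃ e).mp he).2
  have hT : W.twoDescent e (.some e 0 he) = 3 * e ^ 2 + 2 * W.a₂ * e + W.a₄ := by
    rw [twoDescent_some, if_pos rfl]
  rcases Q with _ | ⟨x, y, h⟩
  · rw [← Point.zero_def, add_zero, twoDescent_zero, mul_one]
    exact IsSquare.mul_self _
  by_cases hx : x = e
  · subst hx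
    rw [some_eq_some_zero ha₁ ha₃ he h, Point.add_self_of_Y_eq (by simp [negY, ha₁, ha₃]),
      twoDescent_zero, one_mul]
    exact IsSquare.mul_self _
  have key := sub_mul_addX_sub_eq ha₁ ha₃ he.1 h.1 hx
  have hx₃ : W.addX e x (W.slope e x 0 y) ≠ e := fun h₃ =>
    hc (by rw [← key, h₃, sub_self, mul_zero])
  rw [Point.add_of_X_ne (Ne.symm hx), hT, twoDescent_some, twoDescent_some, if_neg hx₃,
    if_neg hx]
  exact ⟨3 * e ^ 2 + 2 * W.a₂ * e + W.a₄,
    by linear_combination (3 * e ^ 2 + 2 * W.a₂ * e + W.a₄) * key⟩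

lemma isSquare_twoDescent_add_mul (ha₁ : W.a₁ = 0) (ha₃ : W.a₃ = 0) {e : K}
    (he : W.Nonsingular e 0) (P Q : W.Point) :
    IsSquare (W.twoDescent e (P + Q) * W.twoDescent e P * W.twoDescent e Q) := by
  set T : W.Point := .some e 0 he
  by_cases hP : P = T
  · rw [hP]
    exact isSquare_twoDescent_torsion_add_mul ha₁ ha₃ he Q
  by_cases hQ : Q = T
  · rw [hQ, add_comm, mul_right_comm]
    exact isSquare_twoDescent_torsion_add_mul ha₁ ha₃ he P
  by_cases hPQ : P + Q = T
  · have h := isSquare_twoDescent_torsion_add_mul ha₁ ha₃ he (-P)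
    rw [twoDescent_neg, show T + -P = Q by rw [← hPQ]; abel] at h
    rw [hPQ]
    convert h using 1
    ring
  rcases P with _ | ⟨x₁, y₁, h₁⟩
  · rw [← Point.zero_def, zero_add, twoDescent_zero, mul_one]
    exact IsSquare.mul_self _
  rcases Q with _ | ⟨x₂, y₂, h₂⟩
  · rw [← Point.zero_def, add_zero, twoDescent_zero, mul_one]
    exact IsSquare.mul_self _
  by_cases hxy : x₁ = x₂ ∧ y₁ = W.negY x₂ y₂
  · rw [Point.add_of_Y_eq hxy.1 hxy.2, twoDescent_zero, one_mul, twoDescent_some,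
      twoDescent_some, hxy.1]
    exact IsSquare.mul_self _
  rw [Point.add_some hxy] at hPQ ⊢
  rw [twoDescent_of_ne ha₁ ha₃ he _ hP, twoDescent_of_ne ha₁ ha₃ he _ hQ,
    twoDescent_of_ne ha₁ ha₃ he _ hPQ]
  exact ⟨W.slope x₁ x₂ y₁ y₂ * (e - x₁) + y₁,
    by linear_combination sub_mul_sub_mul_addX_sub_eq_sq ha₁ ha₃ he.1 h₁.1 h₂.1 hxy⟩

lemma isSquare_twoDescent_two_nsmul (ha₁ : W.a₁ = 0) (ha₃ : W.a₃ = 0) {e : K}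
    (he : W.Nonsingular e 0) (S : W.Point) : IsSquare (W.twoDescent e (2 • S)) := by
  have hS := twoDescent_ne_zero ha₁ ha₃ he S
  have h := (isSquare_twoDescent_add_mul ha₁ ha₃ he S S).div (IsSquare.mul_self (W.twoDescent e S))
  rwa [← two_nsmul, mul_assoc, mul_div_cancel_right₀ _ (mul_ne_zero hS hS)] at h

lemma isSquare_twoDescent_mul_of_sub_eq_two_nsmul (ha₁ : W.a₁ = 0) (ha₃ : W.a₃ = 0) {e : K}
    (he : W.Nonsingular e 0) {T R S : W.Point} (hTR : T - R = 2 • S) :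
    IsSquare (W.twoDescent e T * W.twoDescent e R) := by
  have h := (isSquare_twoDescent_add_mul ha₁ ha₃ he (T - R) R).div
    (hTR ▸ isSquare_twoDescent_two_nsmul ha₁ ha₃ he S)
  rwa [sub_add_cancel, mul_right_comm, mul_div_cancel_right₀ _
    (twoDescent_ne_zero ha₁ ha₃ he (T - R))] at h

theorem not_isOfFinAddOrder_of_twoDescent (ha₁ : W.a₁ = 0) (ha₃ : W.a₃ = 0) {R : W.Point}
    (h : ∀ T : W.Point, 2 • T = 0 →
      (∃ e, W.Nonsingular e 0 ∧ ¬IsSquare (W.twoDescent e T * W.twoDescent e R)) ∧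
      (T ≠ 0 → ∃ e, W.Nonsingular e 0 ∧ ¬IsSquare (W.twoDescent e T))) :
    ¬IsOfFinAddOrder R := by
  intro hR
  obtain ⟨T, S, hT, hTR | ⟨hT0, hTS⟩⟩ := exists_two_nsmul_eq_zero_of_isOfFinAddOrder hR
  · obtain ⟨e, he, hns⟩ := (h T hT).1
    exact hns (isSquare_twoDescent_mul_of_sub_eq_two_nsmul ha₁ ha₃ he hTR)
  · obtain ⟨e, he, hns⟩ := (h T hT).2 hT0
    exact hns (hTS ▸ isSquare_twoDescent_two_nsmul ha₁ ha₃ he S)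

end WeierstrassCurve.Affine

open WeierstrassCurve.Affine

lemma E15''_nonsingular_zero_iff (e : ℚ) :
    E15''.Nonsingular e 0 ↔ e = -8364 ∨ e = 1428 ∨ e = 6936 := by
  rw [nonsingular_zero_iff_of_a₁_a₃ rfl rfl]
  constructor
  · rintro ⟨hf, -⟩
    have h : (e + 8364) * (e - 1428) * (e - 6936) = 0 := by
      simp only [E15''] at hf
      linear_combination hf
    simp only [mul_eq_zero, sub_eq_zero, add_eq_zero_iff_eq_neg] at h
    tauto
  · rintro (rfl | rfl | rfl) <;> norm_num [E15'']

lemma E15''_not_isOfFinAddOrder {x y : ℚ} (h : E15''.Nonsingular x y) (hx₁ : x ≠ -8364)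
    (hx₂ : x ≠ 1428) (h₀ : ¬IsSquare (x + 8364) ∨ ¬IsSquare (x - 1428))
    (h₁ : ¬IsSquare (-9792 * (x - 1428))) (h₂ : ¬IsSquare (9792 * (x + 8364)))
    (h₃ : ¬IsSquare (15300 * (x + 8364))) : ¬IsOfFinAddOrder (Point.some x y h) := by
  have he₁ : E15''.Nonsingular (-8364) 0 := (E15''_nonsingular_zero_iff _).mpr (by norm_num)
  have he₂ : E15''.Nonsingular 1428 0 := (E15''_nonsingular_zero_iff _).mpr (by norm_num)
  have hψ₁ : E15''.twoDescent (-8364) (.some x y h) = x + 8364 := by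
    rw [twoDescent_some, if_neg hx₁, sub_neg_eq_add]
  have hψ₂ : E15''.twoDescent 1428 (.some x y h) = x - 1428 := by
    rw [twoDescent_some, if_neg hx₂]
  refine not_isOfFinAddOrder_of_twoDescent rfl rfl fun T hT => ?_
  by_cases hT0 : T = 0
  · subst hT0
    simp only [twoDescent_zero, one_mul, ne_eq, not_true_eq_false, false_imp_iff, and_true]
    rcases h₀ with h₀ | h₀
    · exact ⟨-8364, he₁, hψ₁ ▸ h₀⟩
    · exact ⟨1428, he₂, hψ₂ ▸ h₀⟩
  obtain ⟨e, he, rfl⟩ := exists_eq_some_zero_of_two_nsmul_eq_zero rfl rfl hT hT0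
  rcases (E15''_nonsingular_zero_iff e).mp he with rfl | rfl | rfl
  · refine ⟨⟨1428, he₂, ?_⟩, fun _ => ⟨1428, he₂, ?_⟩⟩ <;>
      rw [twoDescent_some, if_neg (by norm_num)]
    · rwa [hψ₂, show (-8364 : ℚ) - 1428 = -9792 by norm_num]
    · norm_num
  all_goals
    refine ⟨⟨-8364, he₁, ?_⟩, fun _ => ⟨-8364, he₁, ?_⟩⟩ <;>
      rw [twoDescent_some, if_neg (by norm_num)]
  · rwa [hψ₁, show (1428 : ℚ) - -8364 = 9792 by norm_num]
  · norm_num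
  · rwa [hψ₁, show (6936 : ℚ) - -8364 = 15300 by norm_num]
  · norm_num

/-- The pairs `(852, 179712)` and `(−3468, 499392)` are `ℚ`-rational points of `E''₁₅`,
each of infinite order in the group of `ℚ`-rational points; in particular the group of
`ℚ`-rational points of `E''₁₅` is infinite. -/
theorem statement2 :
    ∃ (h₁ : E15''.Nonsingular 852 179712) (h₂ : E15''.Nonsingular (-3468) 499392),
      (∀ n : ℤ, n ≠ 0 → n • (WeierstrassCurve.Affine.Point.some _ _ h₁) ≠ 0) ∧
      (∀ n : ℤ, n ≠ 0 → n • (WeierstrassCurve.Affine.Point.some _ _ h₂) ≠ 0) ∧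
      Infinite E15''.Point := by
  have h₁ : E15''.Nonsingular 852 179712 := by norm_num [nonsingular_iff, equation_iff, E15'']
  have h₂ : E15''.Nonsingular (-3468) 499392 := by
    norm_num [nonsingular_iff, equation_iff, E15'']
  have hR₁ := E15''_not_isOfFinAddOrder h₁ (by norm_num) (by norm_num) (by norm_num) (by norm_num)
    (by norm_num) (by norm_num)
  have hR₂ := E15''_not_isOfFinAddOrder h₂ (by norm_num) (by norm_num) (by norm_num) (by norm_num)
    (by norm_num) (by norm_num)
  refine ⟨h₁, h₂, fun n hn hP => hR₁ (isOfFinAddOrder_iff_zsmul_eq_zero.mpr ⟨n, hn, hP⟩),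
    fun n hn hP => hR₂ (isOfFinAddOrder_iff_zsmul_eq_zero.mpr ⟨n, hn, hP⟩), ?_⟩
  exact not_finite_iff_infinite.mp fun _ => hR₁ (isOfFinAddOrder_of_finite _)
end

section
/- There are exactly 4 SL₂(ℤ)-orbits of positive definite integral binary quadratic forms of discriminant −68, represented by the pairwise inequivalent forms x² + 17y², 2x² + 2xy + 9y², 3x² + 2xy + 6y², and 3x² − 2xy + 6y²; every positive definite form of discriminant −68 is equivalent to exactly one of these. -/
/-- An integral binary quadratic form `Q(x,y) = Ax² + Bxy + Cy²`. -/
structure BQF where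
  A : ℤ
  B : ℤ
  C : ℤ

/-- Evaluation of a binary quadratic form. -/
def BQF.eval (Q : BQF) (x y : ℤ) : ℤ := Q.A * x ^ 2 + Q.B * x * y + Q.C * y ^ 2

/-- The discriminant `B² − 4AC` of a binary quadratic form. -/
def BQF.disc (Q : BQF) : ℤ := Q.B ^ 2 - 4 * Q.A * Q.C

/-- A binary quadratic form is positive definite if `A > 0` and its discriminant is negative. -/
def BQF.PosDef (Q : BQF) : Prop := 0 < Q.A ∧ Q.disc < 0

/-- Two forms are `SL₂(ℤ)`-equivalent if one is obtained from the other by the action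
`(Q|γ)(x,y) = Q(ax + by, cx + dy)` for some `γ = [[a,b],[c,d]] ∈ SL₂(ℤ)`. -/
def BQF.Equivalent (Q Q' : BQF) : Prop :=
  ∃ γ : Matrix.SpecialLinearGroup (Fin 2) ℤ, ∀ x y : ℤ,
    Q'.eval x y =
      Q.eval ((γ : Matrix (Fin 2) (Fin 2) ℤ) 0 0 * x + (γ : Matrix (Fin 2) (Fin 2) ℤ) 0 1 * y)
        ((γ : Matrix (Fin 2) (Fin 2) ℤ) 1 0 * x + (γ : Matrix (Fin 2) (Fin 2) ℤ) 1 1 * y)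

/-!
Gauss reduction: translating by `x ↦ x + ny` brings `B` into `(-A, A]`, and `(x, y) ↦ (-y, x)`
swaps `A` and `C`, decreasing `A` whenever `C < A`, so every positive definite form is equivalent to a reduced
one (`-A < B ≤ A ≤ C`, and `B ≥ 0` if `A = C`). A reduced form has `3A² ≤ |D|`, which for
`D = -68` leaves exactly the four listed forms.

They are pairwise inequivalent because equivalent forms represent the same integers, and
`4A·Q(x,y) = (2Ax + By)² + |D|y²` shows that small values are only represented with `y = 0`.
The forms `3x² ± 2xy + 6y²` represent the same integers; but a transformation between them must
send `(1, 0)` to `±(1, 0)`, which forces the new middle coefficient to be `2 mod 6`.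
-/

namespace BQF

@[simps]
def act (Q : BQF) (a b c d : ℤ) : BQF :=
  ⟨Q.eval a c, 2 * Q.A * a * b + Q.B * (a * d + b * c) + 2 * Q.C * c * d, Q.eval b d⟩

lemma eval_act (Q : BQF) (a b c d x y : ℤ) :
    (Q.act a b c d).eval x y = Q.eval (a * x + b * y) (c * x + d * y) := by
  simp only [eval, act]
  ring

lemma disc_act (Q : BQF) (a b c d : ℤ) :
    (Q.act a b c d).disc = (a * d - b * c) ^ 2 * Q.disc := by
  simp only [disc, act, eval]
  ring

lemma ext_of_eval {Q Q' : BQF} (h : ∀ x y, Q.eval x y = Q'.eval x y) : Q = Q' := by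
  have h10 := h 1 0
  have h01 := h 0 1
  have h11 := h 1 1
  obtain ⟨A, B, C⟩ := Q
  obtain ⟨A', B', C'⟩ := Q'
  simp only [eval] at h10 h01 h11
  simp only [mk.injEq]
  omega

lemma equivalent_iff {Q Q' : BQF} : Q.Equivalent Q' ↔ ∃ a b c d : ℤ, a * d - b * c = 1 ∧
    ∀ x y, Q'.eval x y = Q.eval (a * x + b * y) (c * x + d * y) := by
  constructor
  · rintro ⟨γ, h⟩
    have hdet := γ.2
    rw [Matrix.det_fin_two] at hdet
    exact ⟨_, _, _, _, hdet, h⟩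
  · rintro ⟨a, b, c, d, hdet, h⟩
    exact ⟨⟨!![a, b; c, d], by simpa [Matrix.det_fin_two_of] using hdet⟩, by simpa using h⟩

lemma equivalent_iff_act {Q Q' : BQF} :
    Q.Equivalent Q' ↔ ∃ a b c d : ℤ, a * d - b * c = 1 ∧ Q' = Q.act a b c d := by
  simp only [equivalent_iff]
  refine exists₄_congr fun a b c d => and_congr_right fun _ => ⟨fun h => ?_, ?_⟩
  · exact ext_of_eval fun x y => by rw [h, eval_act]
  · rintro rfl x y
    exact eval_act Q a b c d x y

lemma equivalent_act (Q : BQF) {a b c d : ℤ} (h : a * d - b * c = 1) :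
    Q.Equivalent (Q.act a b c d) :=
  equivalent_iff_act.2 ⟨a, b, c, d, h, rfl⟩

lemma Equivalent.symm {Q Q' : BQF} (h : Q.Equivalent Q') : Q'.Equivalent Q := by
  obtain ⟨a, b, c, d, hdet, h⟩ := equivalent_iff.1 h
  refine equivalent_iff.2 ⟨d, -b, -c, a, by linear_combination hdet, fun x y => ?_⟩
  rw [h]
  congr 1
  · linear_combination (-x) * hdet
  · linear_combination (-y) * hdet

lemma Equivalent.trans {Q Q' Q'' : BQF} (h : Q.Equivalent Q') (h' : Q'.Equivalent Q'') :
    Q.Equivalent Q'' := by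
  obtain ⟨a, b, c, d, hdet, h⟩ := equivalent_iff.1 h
  obtain ⟨a', b', c', d', hdet', h'⟩ := equivalent_iff.1 h'
  refine equivalent_iff.2 ⟨a * a' + b * c', a * b' + b * d', c * a' + d * c', c * b' + d * d',
    by linear_combination (a' * d' - b' * c') * hdet + hdet', fun x y => ?_⟩
  rw [h', h]
  ring_nf

lemma Equivalent.disc_eq {Q Q' : BQF} (h : Q.Equivalent Q') : Q'.disc = Q.disc := by
  obtain ⟨a, b, c, d, hdet, rfl⟩ := equivalent_iff_act.1 h
  rw [disc_act, hdet, one_pow, one_mul]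

lemma four_mul_A_mul_eval (Q : BQF) (x y : ℤ) :
    4 * Q.A * Q.eval x y = (2 * Q.A * x + Q.B * y) ^ 2 - Q.disc * y ^ 2 := by
  simp only [eval, disc]
  ring

lemma PosDef.eval_pos {Q : BQF} (hQ : Q.PosDef) {x y : ℤ} (hxy : x ≠ 0 ∨ y ≠ 0) :
    0 < Q.eval x y := by
  obtain ⟨hA, hd⟩ := hQ
  rcases eq_or_ne y 0 with rfl | hy
  · have hx : x ≠ 0 := hxy.resolve_right (not_not.2 rfl)
    simpa [eval] using mul_pos hA (sq_pos_of_ne_zero hx)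
  · have key := Q.four_mul_A_mul_eval x y
    nlinarith [sq_nonneg (2 * Q.A * x + Q.B * y), mul_pos (neg_pos.2 hd) (sq_pos_of_ne_zero hy)]

lemma Equivalent.posDef {Q Q' : BQF} (h : Q.Equivalent Q') (hQ : Q.PosDef) : Q'.PosDef := by
  refine ⟨?_, h.disc_eq ▸ hQ.2⟩
  obtain ⟨a, b, c, d, hdet, rfl⟩ := equivalent_iff_act.1 h
  refine hQ.eval_pos ?_
  by_contra! h0
  rw [h0.1, h0.2] at hdet
  simp at hdet

lemma eq_zero_of_four_mul_A_mul_eval_lt {Q : BQF} (hd : Q.disc ≤ 0) {x y : ℤ}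
    (h : 4 * Q.A * Q.eval x y < -Q.disc) : y = 0 := by
  by_contra hy
  have hy2 : 1 ≤ y ^ 2 := sq_pos_of_ne_zero hy
  nlinarith [Q.four_mul_A_mul_eval x y, sq_nonneg (2 * Q.A * x + Q.B * y),
    mul_nonneg (neg_nonneg.2 hd) (sub_nonneg.2 hy2)]

def Represents (Q : BQF) (n : ℤ) : Prop := ∃ x y, Q.eval x y = n

lemma represents_A (Q : BQF) : Q.Represents Q.A := ⟨1, 0, by simp [eval]⟩

lemma Equivalent.represents {Q Q' : BQF} (h : Q.Equivalent Q') {n : ℤ} (hn : Q'.Represents n) :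
    Q.Represents n := by
  obtain ⟨a, b, c, d, -, h⟩ := equivalent_iff.1 h
  obtain ⟨x, y, rfl⟩ := hn
  exact ⟨_, _, (h x y).symm⟩

lemma not_represents_of_lt {Q : BQF} (hd : Q.disc ≤ 0) {n : ℤ} (hn : 4 * Q.A * n < -Q.disc)
    (hA : ∀ x, Q.A * x ^ 2 ≠ n) : ¬ Q.Represents n := by
  rintro ⟨x, y, rfl⟩
  obtain rfl := eq_zero_of_four_mul_A_mul_eval_lt hd hn
  exact hA x (by simp [eval])

lemma not_equivalent_of_not_represents_A {Q Q' : BQF} (h : ¬ Q'.Represents Q.A) :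
    ¬ Q.Equivalent Q' :=
  fun hQQ' => h (hQQ'.symm.represents Q.represents_A)

lemma eq_of_equivalent_of_pairwise {l : List BQF} (hl : l.Pairwise fun R S => ¬ R.Equivalent S)
    {R S : BQF} (hR : R ∈ l) (hS : S ∈ l) (h : R.Equivalent S) : R = S := by
  have : Std.Symm fun R S : BQF => ¬ R.Equivalent S := ⟨fun _ _ h h' => h h'.symm⟩
  by_contra hne
  exact hl.forall hR hS hne h

lemma equivalent_swap (Q : BQF) : Q.Equivalent ⟨Q.C, -Q.B, Q.A⟩ := by
  convert Q.equivalent_act (show 0 * 0 - (-1) * 1 = (1 : ℤ) by norm_num) using 1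
  simp [act, eval]

lemma exists_equivalent_B_mem_Ioc (Q : BQF) (hA : 0 < Q.A) :
    ∃ Q', Q.Equivalent Q' ∧ Q'.A = Q.A ∧ -Q.A < Q'.B ∧ Q'.B ≤ Q.A := by
  obtain ⟨n, hn, -⟩ := existsUnique_add_zsmul_mem_Ioc (mul_pos two_pos hA) Q.B (-Q.A)
  rw [Set.mem_Ioc, smul_eq_mul] at hn
  refine ⟨Q.act 1 n 0 1, Q.equivalent_act (by ring), by simp [eval], ?_, ?_⟩ <;>
    simp only [act_B] <;> linarith

def IsReduced (Q : BQF) : Prop := -Q.A < Q.B ∧ Q.B ≤ Q.A ∧ Q.A ≤ Q.C ∧ (Q.A = Q.C → 0 ≤ Q.B)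

theorem exists_equivalent_isReduced (Q : BQF) (hQ : Q.PosDef) :
    ∃ R, Q.Equivalent R ∧ R.IsReduced := by
  induction hm : Q.A.toNat using Nat.strong_induction_on generalizing Q with
  | _ m ih =>
  obtain ⟨Q₁, hQQ₁, hA, hBl, hBu⟩ := exists_equivalent_B_mem_Ioc Q hQ.1
  have hQ₁ : Q₁.PosDef := hQQ₁.posDef hQ
  rcases lt_trichotomy Q₁.A Q₁.C with hAC | hAC | hAC
  · exact ⟨Q₁, hQQ₁, by omega, by omega, hAC.le, fun h => absurd h hAC.ne⟩
  · by_cases hB : 0 ≤ Q₁.B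
    · exact ⟨Q₁, hQQ₁, by omega, by omega, hAC.le, fun _ => hB⟩
    · exact ⟨_, hQQ₁.trans Q₁.equivalent_swap, by dsimp only; omega, by dsimp only; omega,
        hAC.ge, fun _ => by dsimp only; omega⟩
  · have hswap := Q₁.equivalent_swap
    obtain ⟨R, hR, hRred⟩ := ih _ (by have := (hswap.posDef hQ₁).1; dsimp only at this ⊢; omega)
      _ (hswap.posDef hQ₁) rfl
    exact ⟨R, (hQQ₁.trans hswap).trans hR, hRred⟩

lemma IsReduced.three_mul_A_sq_le {Q : BQF} (hQ : Q.IsReduced) : 3 * Q.A ^ 2 ≤ -Q.disc := by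
  obtain ⟨h₁, h₂, h₃, -⟩ := hQ
  simp only [disc]
  nlinarith

lemma IsReduced.mem_of_disc_eq_neg_68 {Q : BQF} (hQ : Q.IsReduced) (hd : Q.disc = -68) :
    Q ∈ [(⟨1, 0, 17⟩ : BQF), ⟨2, 2, 9⟩, ⟨3, 2, 6⟩, ⟨3, -2, 6⟩] := by
  have hA := hQ.three_mul_A_sq_le
  obtain ⟨A, B, C⟩ := Q
  obtain ⟨h₁, h₂, h₃, h₄⟩ := hQ
  simp only [disc] at hd hA h₁ h₂ h₃ h₄ ⊢
  have : 0 < A := by omega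
  have : A ≤ 4 := by nlinarith
  interval_cases A <;> interval_cases B <;> simp <;> omega

lemma not_equivalent_three_two_six : ¬ (⟨3, 2, 6⟩ : BQF).Equivalent ⟨3, -2, 6⟩ := by
  intro h
  obtain ⟨a, b, c, d, hdet, hQ⟩ := equivalent_iff_act.1 h
  simp only [act, mk.injEq] at hQ
  obtain ⟨hA, hB, -⟩ := hQ
  obtain rfl : c = 0 :=
    eq_zero_of_four_mul_A_mul_eval_lt (Q := ⟨3, 2, 6⟩) (by norm_num [disc]) (by rw [← hA]; norm_num [disc])
  have : 6 * (a * b) = -4 := by linear_combination -hB - 2 * hdet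
  omega

end BQF

open BQF in
/-- There are exactly `4` `SL₂(ℤ)`-orbits of positive definite integral binary quadratic forms
of discriminant `−68`, represented by the pairwise inequivalent forms `x² + 17y²`,
`2x² + 2xy + 9y²`, `3x² + 2xy + 6y²` and `3x² − 2xy + 6y²`: every positive definite form of
discriminant `−68` is equivalent to exactly one of these. -/
theorem statement8 :
    List.Pairwise (fun R S => ¬ BQF.Equivalent R S)
      [(⟨1, 0, 17⟩ : BQF), ⟨2, 2, 9⟩, ⟨3, 2, 6⟩, ⟨3, -2, 6⟩] ∧
    ∀ Q : BQF, Q.PosDef → Q.disc = -68 →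
      ∃! R : BQF, R ∈ [(⟨1, 0, 17⟩ : BQF), ⟨2, 2, 9⟩, ⟨3, 2, 6⟩, ⟨3, -2, 6⟩] ∧
        Q.Equivalent R := by
  have hpair : List.Pairwise (fun R S => ¬ BQF.Equivalent R S)
      [(⟨1, 0, 17⟩ : BQF), ⟨2, 2, 9⟩, ⟨3, 2, 6⟩, ⟨3, -2, 6⟩] := by
    simp only [Int.reduceNeg, List.pairwise_cons, List.mem_cons, List.not_mem_nil, or_false,
      forall_eq_or_imp, forall_eq, IsEmpty.forall_iff, implies_true, List.Pairwise.nil, and_self,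
      and_true]
    refine ⟨⟨?_, ?_, ?_⟩, ⟨?_, ?_⟩, not_equivalent_three_two_six⟩ <;>
      exact not_equivalent_of_not_represents_A
        (not_represents_of_lt (by norm_num [disc]) (by norm_num [disc]) fun x => by dsimp only; omega)
  refine ⟨hpair, fun Q hQ hd => ?_⟩
  obtain ⟨R, hQR, hR⟩ := exists_equivalent_isReduced Q hQ
  have hRmem := hR.mem_of_disc_eq_neg_68 (hQR.disc_eq.trans hd)
  exact ⟨R, ⟨hRmem, hQR⟩, fun S ⟨hS, hQS⟩ =>
    eq_of_equivalent_of_pairwise hpair hS hRmem (hQS.symm.trans hQR)⟩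
end
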